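/- arXiv:2104.03079 — 2 statements merged into one kernel-verified Lean document; each statement's English description precedes it below -/
import Mathlib

section
/- Let P and Q be posets with disjoint carriers X and Y, and let R be a generalized vertical sum of P and Q. Then D(R) is the disjoint union, over T ∈ D(Q), of the sets { D ∪ ↓_R T : D ∈ D(P ∖ ↓_R T) }; equivalently, the map sending a pair (T, D), where T ∈ D(Q) and D is a down-set of the subposet of P induced on X ∖ ↓_R T, to D ∪ ↓_R T, is a bijection onto D(R). -/
variable {α : Type*} [PartialOrder α]

/-- The down-sets of the subposet of `α` induced on the carrier `C`. -/
def DSOn (C : Set α) : Set (Set α) :=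
  {D | D ⊆ C ∧ ∀ a ∈ C, ∀ b ∈ D, a ≤ b → a ∈ D}

/-- The down closure `↓_R S` of a subset `S` in the ambient poset. -/
def dcl (S : Set α) : Set α := {a | ∃ b ∈ S, a ≤ b}

/-- Let `R` be a poset on `X ∪ Y` (here: the ambient type `α`), with `X, Y` disjoint,
which is a generalized vertical sum of `P = R|X` and `Q = R|Y`, i.e. every relation
`a ≤ b` lies in `X×X`, `Y×Y` or `X×Y`.  Then the map sending a pair `(T, D)`, where
`T ∈ D(Q)` and `D` is a down-set of the subposet induced on `X ∖ ↓_R T`, to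
`D ∪ ↓_R T`, is a bijection onto `D(R)`. -/
theorem stmt2 (X Y : Set α)
    (hdisj : Disjoint X Y) (hcover : X ∪ Y = Set.univ)
    (hgvs : ∀ a b : α, a ≤ b →
      (a ∈ X ∧ b ∈ X) ∨ (a ∈ Y ∧ b ∈ Y) ∨ (a ∈ X ∧ b ∈ Y)) :
    Function.Injective
      (fun p : Σ T : DSOn Y, DSOn (X \ dcl (T : Set α)) =>
        (p.2 : Set α) ∪ dcl (p.1 : Set α))
    ∧ Set.range
      (fun p : Σ T : DSOn Y, DSOn (X \ dcl (T : Set α)) =>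
        (p.2 : Set α) ∪ dcl (p.1 : Set α))
      = DSOn Set.univ := by
  -- key computation: ((D ∪ dcl T) ∩ Y) = T
  have key : ∀ (T : DSOn Y) (D : DSOn (X \ dcl (T : Set α))),
      ((D : Set α) ∪ dcl (T : Set α)) ∩ Y = (T : Set α) := by
    rintro ⟨T, hT1, hT2⟩ ⟨D, hD1, hD2⟩
    ext a
    simp only [Set.mem_inter_iff, Set.mem_union]
    constructor
    · rintro ⟨hD | ⟨b, hb, hab⟩, haY⟩
      · exact absurd haY ((Set.disjoint_left.mp hdisj) (hD1 hD).1)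
      · exact hT2 a haY b hb hab
    · intro ha
      exact ⟨Or.inr ⟨a, ha, le_refl a⟩, hT1 ha⟩
  -- key2 : ((D ∪ dcl T) \ dcl T) = D
  have key2 : ∀ (T : DSOn Y) (D : DSOn (X \ dcl (T : Set α))),
      ((D : Set α) ∪ dcl (T : Set α)) \ dcl (T : Set α) = (D : Set α) := by
    rintro ⟨T, hT1, hT2⟩ ⟨D, hD1, hD2⟩
    ext a
    simp only [Set.mem_diff, Set.mem_union]
    constructor
    · rintro ⟨hD | hdc, hnd⟩
      · exact hD
      · exact absurd hdc hnd
    · intro ha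
      exact ⟨Or.inl ha, (hD1 ha).2⟩
  constructor
  · rintro ⟨T, D⟩ ⟨T', D'⟩ h
    simp only at h
    have hTT : (T : Set α) = (T' : Set α) := by
      rw [← key T D, ← key T' D', h]
    have hT : T = T' := Subtype.ext hTT
    subst hT
    have hDD : (D : Set α) = (D' : Set α) := by
      rw [← key2 T D, ← key2 T D', h]
    exact congrArg (Sigma.mk T) (Subtype.ext hDD)
  · ext E
    constructor
    · rintro ⟨⟨⟨T, hT1, hT2⟩, ⟨D, hD1, hD2⟩⟩, rfl⟩
      refine ⟨fun _ _ => Set.mem_univ _, ?_⟩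
      intro a _ b hb hab
      rcases hb with hbD | ⟨c, hc, hbc⟩
      · by_cases hadc : a ∈ dcl T
        · exact Or.inr hadc
        · have haX : a ∈ X := by
            have hbX : b ∈ X := (hD1 hbD).1
            rcases hgvs a b hab with ⟨h1, _⟩ | ⟨_, h2⟩ | ⟨h1, _⟩
            · exact h1
            · exact absurd h2 ((Set.disjoint_left.mp hdisj) hbX)
            · exact h1
          exact Or.inl (hD2 a ⟨haX, hadc⟩ b hbD hab)
      · exact Or.inr ⟨c, hc, hab.trans hbc⟩
    · rintro ⟨-, hE2⟩
      have hEdown : ∀ a b : α, b ∈ E → a ≤ b → a ∈ E := fun a b hb hab =>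
        hE2 a (Set.mem_univ a) b hb hab
      set T : Set α := E ∩ Y with hTdef
      have hTmem : T ∈ DSOn Y := by
        refine ⟨Set.inter_subset_right, ?_⟩
        intro a haY b hb hab
        exact ⟨hEdown a b hb.1 hab, haY⟩
      have hdclsub : dcl T ⊆ E := by
        rintro a ⟨b, hb, hab⟩
        exact hEdown a b hb.1 hab
      set D : Set α := E \ dcl T with hDdef
      have hDmem : D ∈ DSOn (X \ dcl T) := by
        constructor
        · rintro a ⟨haE, hand⟩
          refine ⟨?_, hand⟩
          have : a ∈ X ∪ Y := hcover ▸ Set.mem_univ a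
          rcases this with h | h
          · exact h
          · exact absurd ⟨a, ⟨haE, h⟩, le_refl a⟩ hand
        · rintro a ⟨haX, hand⟩ b ⟨hbE, _⟩ hab
          exact ⟨hEdown a b hbE hab, hand⟩
      refine ⟨⟨⟨T, hTmem⟩, ⟨D, hDmem⟩⟩, ?_⟩
      simp only
      ext a
      constructor
      · rintro (⟨haE, -⟩ | h)
        · exact haE
        · exact hdclsub h
      · intro haE
        by_cases h : a ∈ dcl T
        · exact Or.inr h
        · exact Or.inl ⟨haE, h⟩
end

section
/- Let R be a generalized vertical sum of posets P and Q (on disjoint carriers X and Y), with an up-set B⁻ of P, a down-set B⁺ of Q, S⁻ = P restricted to B⁻, S⁺ = Q restricted to B⁺, and a map σ : D(S⁺) → P(B⁻) satisfying σ(T) ⊆ X ∩ ↓_R T ⊆ ↓_P σ(T) for all T ∈ D(S⁺). Then for every T ∈ D(S⁺), the map τ_T : D ↦ D ∖ T is an order isomorphism (with respect to inclusion) from J_T(R) onto ⋃ { J_U(P) : U ∈ D(S⁻), σ(T) ⊆ U } = { D ∈ D(P) : σ(T) ⊆ D }, with inverse D' ↦ D' ∪ T. In particular, J_∅(R) = D(P).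 -/
variable {α : Type*} [PartialOrder α]

/-- The down closure of `S` within the subposet induced on the carrier `C`. -/
def dclOn (C S : Set α) : Set α := {a ∈ C | ∃ b ∈ S, b ∈ C ∧ a ≤ b}

/-- Let `R` be a poset on `X ∪ Y` (here: the ambient type `α`), `X, Y` disjoint, which
is a generalized vertical sum of `P = R|X` and `Q = R|Y`; let `B⁻` be an up-set of `P`,
`B⁺` a down-set of `Q`, `S⁻ = P|B⁻`, `S⁺ = Q|B⁺`, and `σ : D(S⁺) → P(B⁻)` with
`σ(T) ⊆ X ∩ ↓_R T ⊆ ↓_P σ(T)`.  Then for every `T ∈ D(S⁺)` the map `τ_T : D ↦ D ∖ T`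
is an order isomorphism (w.r.t. inclusion) from `J_T(R) = {D ∈ D(R) : D ∩ Y = T}` onto
`⋃ {J_U(P) : U ∈ D(S⁻), σ(T) ⊆ U} = {D ∈ D(P) : σ(T) ⊆ D}`, with inverse
`D' ↦ D' ∪ T`.  In particular `J_∅(R) = D(P)`. -/
theorem stmt4 (X Y Bm Bp : Set α)
    (hdisj : Disjoint X Y) (hcover : X ∪ Y = Set.univ)
    (hgvs : ∀ a b : α, a ≤ b →
      (a ∈ X ∧ b ∈ X) ∨ (a ∈ Y ∧ b ∈ Y) ∨ (a ∈ X ∧ b ∈ Y))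
    (hBmX : Bm ⊆ X) (hBmUp : ∀ a ∈ Bm, ∀ b ∈ X, a ≤ b → b ∈ Bm)
    (hBpY : Bp ⊆ Y) (hBpDown : ∀ a ∈ Y, ∀ b ∈ Bp, a ≤ b → a ∈ Bp)
    (σ : Set α → Set α)
    (hσ : ∀ T ∈ DSOn Bp, σ T ⊆ Bm ∧ σ T ⊆ X ∩ dcl T ∧ X ∩ dcl T ⊆ dclOn X (σ T)) :
    (∀ T ∈ DSOn Bp,
      Set.BijOn (fun D => D \ T) {D ∈ DSOn Set.univ | D ∩ Y = T} {D ∈ DSOn X | σ T ⊆ D}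
      ∧ (∀ D₁ ∈ {D ∈ DSOn Set.univ | D ∩ Y = T}, ∀ D₂ ∈ {D ∈ DSOn Set.univ | D ∩ Y = T},
          D₁ ⊆ D₂ ↔ D₁ \ T ⊆ D₂ \ T)
      ∧ (∀ D' ∈ {D ∈ DSOn X | σ T ⊆ D},
          D' ∪ T ∈ {D ∈ DSOn Set.univ | D ∩ Y = T} ∧ (D' ∪ T) \ T = D')
      ∧ (⋃ U ∈ {U ∈ DSOn Bm | σ T ⊆ U}, {D ∈ DSOn X | D ∩ Bm = U})
          = {D ∈ DSOn X | σ T ⊆ D})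
    ∧ {D ∈ DSOn Set.univ | D ∩ Y = (∅ : Set α)} = DSOn X := by

  have hmem : ∀ a : α, a ∈ X ∨ a ∈ Y := by
    intro a
    have h : a ∈ X ∪ Y := by rw [hcover]; exact Set.mem_univ a
    exact h
  have hXY : ∀ a ∈ X, a ∉ Y := fun a ha hay =>
    Set.disjoint_left.mp hdisj ha hay
  constructor
  · intro T hT
    obtain ⟨hTBp, hTdown⟩ := hT
    have hTY : T ⊆ Y := fun t ht => hBpY (hTBp ht)
    obtain ⟨hσBm, hσdcl, hdclσ⟩ := hσ T ⟨hTBp, hTdown⟩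
    -- forward map is well-defined
    have hfwd : ∀ D, D ∈ DSOn (Set.univ : Set α) → D ∩ Y = T →
        D \ T ∈ DSOn X ∧ σ T ⊆ D \ T := by
      intro D hD hDY
      obtain ⟨_, hDdown⟩ := hD
      have hsubX : D \ T ⊆ X := by
        rintro a ⟨haD, haT⟩
        rcases hmem a with h | h
        · exact h
        · exact absurd (by rw [← hDY]; exact ⟨haD, h⟩ : a ∈ T) haT
      refine ⟨⟨hsubX, ?_⟩, ?_⟩
      · intro a haX b hb hab
        exact ⟨hDdown a (Set.mem_univ a) b hb.1 hab,
          fun haT => hXY a haX (hTY haT)⟩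
      · intro s hs
        obtain ⟨hsX, t, htT, hst⟩ := hσdcl hs
        have htD : t ∈ D := by
          have : t ∈ D ∩ Y := by rw [hDY]; exact htT
          exact this.1
        exact ⟨hDdown s (Set.mem_univ s) t htD hst,
          fun hsT => hXY s hsX (hTY hsT)⟩
    have hTsub : ∀ D, D ∩ Y = T → T ⊆ D := by
      intro D hDY t ht
      have : t ∈ D ∩ Y := by rw [hDY]; exact ht
      exact this.1
    -- backward map
    have hbwd : ∀ D', D' ∈ DSOn X → σ T ⊆ D' →
        ((D' ∪ T ∈ DSOn (Set.univ : Set α)) ∧ (D' ∪ T) ∩ Y = T)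
        ∧ (D' ∪ T) \ T = D' := by
      intro D' hD' hσD'
      obtain ⟨hD'X, hD'down⟩ := hD'
      have hD'T : ∀ a ∈ D', a ∉ T := fun a ha hat => hXY a (hD'X ha) (hTY hat)
      refine ⟨⟨⟨fun _ _ => Set.mem_univ _, ?_⟩, ?_⟩, ?_⟩
      · rintro a _ b (hb | hb) hab
        · rcases hgvs a b hab with ⟨haX, _⟩ | ⟨_, hbY⟩ | ⟨_, hbY⟩
          · exact Or.inl (hD'down a haX b hb hab)
          · exact absurd hbY (hXY b (hD'X hb))
          · exact absurd hbY (hXY b (hD'X hb))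
        · rcases hgvs a b hab with ⟨_, hbX⟩ | ⟨haY, _⟩ | ⟨haX, _⟩
          · exact absurd (hTY hb) (hXY b hbX)
          · exact Or.inr (hTdown a (hBpDown a haY b (hTBp hb) hab) b hb hab)
          · have hadcl : a ∈ X ∩ dcl T := ⟨haX, b, hb, hab⟩
            obtain ⟨_, s, hsσ, hsX, has⟩ := hdclσ hadcl
            exact Or.inl (hD'down a haX s (hσD' hsσ) has)
      · ext a
        constructor
        · rintro ⟨ha | ha, haY⟩
          · exact absurd haY (hXY a (hD'X ha))
          · exact ha
        · intro ha
          exact ⟨Or.inr ha, hTY ha⟩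
      · ext a
        constructor
        · rintro ⟨ha | ha, haT⟩
          · exact ha
          · exact absurd ha haT
        · intro ha
          exact ⟨Or.inl ha, hD'T a ha⟩
    refine ⟨⟨?_, ?_, ?_⟩, ?_, ?_, ?_⟩
    · rintro D ⟨hD, hDY⟩
      exact (hfwd D hD hDY).symm.imp_left id |>.symm
    · rintro D₁ ⟨hD₁, hDY₁⟩ D₂ ⟨hD₂, hDY₂⟩ h
      simp only at h
      have e₁ : D₁ = (D₁ \ T) ∪ T := (Set.diff_union_of_subset (hTsub D₁ hDY₁)).symm
      have e₂ : D₂ = (D₂ \ T) ∪ T := (Set.diff_union_of_subset (hTsub D₂ hDY₂)).symm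
      rw [e₁, e₂, h]
    · rintro D' ⟨hD', hσD'⟩
      obtain ⟨⟨hmem', hint⟩, heq⟩ := hbwd D' hD' hσD'
      exact ⟨D' ∪ T, ⟨hmem', hint⟩, heq⟩
    · rintro D₁ ⟨hD₁, hDY₁⟩ D₂ ⟨hD₂, hDY₂⟩
      constructor
      · intro h a ha
        exact ⟨h ha.1, ha.2⟩
      · intro h
        calc D₁ = (D₁ \ T) ∪ T := (Set.diff_union_of_subset (hTsub D₁ hDY₁)).symm
          _ ⊆ (D₂ \ T) ∪ T := Set.union_subset_union_left T h
          _ = D₂ := Set.diff_union_of_subset (hTsub D₂ hDY₂)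
    · rintro D' ⟨hD', hσD'⟩
      obtain ⟨⟨hmem', hint⟩, heq⟩ := hbwd D' hD' hσD'
      exact ⟨⟨hmem', hint⟩, heq⟩
    · ext D
      simp only [Set.mem_iUnion, Set.mem_setOf_eq]
      constructor
      · rintro ⟨U, ⟨hU, hσU⟩, hD, hDBm⟩
        exact ⟨hD, fun s hs => by rw [← hDBm] at hσU; exact (hσU hs).1⟩
      · rintro ⟨hD, hσD⟩
        refine ⟨D ∩ Bm, ⟨⟨Set.inter_subset_right, ?_⟩, ?_⟩, hD, rfl⟩
        · intro a haBm b hb hab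
          exact ⟨hD.2 a (hBmX haBm) b hb.1 hab, haBm⟩
        · exact fun s hs => ⟨hσD hs, hσBm hs⟩
  · ext D
    simp only [Set.mem_setOf_eq]
    constructor
    · rintro ⟨⟨_, hDdown⟩, hDY⟩
      have hDX : D ⊆ X := by
        intro a ha
        rcases hmem a with h | h
        · exact h
        · exfalso
          have h2 : a ∈ D ∩ Y := ⟨ha, h⟩
          rw [hDY] at h2
          exact h2
      exact ⟨hDX, fun a haX b hb hab => hDdown a (Set.mem_univ a) b hb hab⟩
    · rintro ⟨hDX, hDdown⟩
      refine ⟨⟨fun _ _ => Set.mem_univ _, ?_⟩, ?_⟩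
      · intro a _ b hb hab
        rcases hgvs a b hab with ⟨haX, _⟩ | ⟨_, hbY⟩ | ⟨_, hbY⟩
        · exact hDdown a haX b hb hab
        · exact absurd hbY (Set.disjoint_left.mp hdisj (hDX hb))
        · exact absurd hbY (Set.disjoint_left.mp hdisj (hDX hb))
      · ext a
        simp only [Set.mem_inter_iff, Set.mem_empty_iff_false, iff_false, not_and]
        exact fun ha hay => Set.disjoint_left.mp hdisj (hDX ha) hay
end
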